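/- Let K be a field, let n ≥ 1 and r ≥ 0 be integers, and let q ∈ K with q ≠ 0 and q^j ≠ 1 for all j = 1, …, n. Then ∑_{k=1}^n (−1)^k [n choose k]_q · q^{C(k,2) − (n−1)k} · S_k({1}^r; q)/(1 − q^k) = −∑_{k=1}^n q^{rk}/(1 − q^k)^{r+1}. -/

import Mathlib

/-- The Gaussian binomial coefficient `[m choose k]_q`, defined as
`((1−q^m)(1−q^{m−1})⋯(1−q^{m−k+1}))/((1−q^k)(1−q^{k−1})⋯(1−q))` for `0 ≤ k ≤ m`,
and `0` otherwise. -/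
def qbin {K : Type*} [Field K] (q : K) (m k : ℕ) : K :=
  if k ≤ m then
    (∏ i ∈ Finset.range k, (1 - q ^ (m - i))) / (∏ i ∈ Finset.range k, (1 - q ^ (i + 1)))
  else 0

/-- The `q`-analog of the non-strict multiple harmonic sum:
`S_n({t}^r; q) = ∑_{1 ≤ j₁ ≤ ⋯ ≤ j_r ≤ n} q^{j₁+⋯+j_r}/((1−q^{j₁})^t ⋯ (1−q^{j_r})^t)`,
defined by recursion on the number `r` of indices (summing over the largest index `j_r`). -/
def mhsq {K : Type*} [Field K] (q : K) (t : ℕ) : ℕ → ℕ → K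
  | 0, _ => 1
  | r + 1, n => ∑ j ∈ Finset.Icc 1 n, q ^ j / (1 - q ^ j) ^ t * mhsq q t r j

/-!
Write `c(n,k) = (-1)^k [n choose k]_q q^(C(k+1,2) - n k)` for the coefficient on the left and
`A = q^(n+1) / (1 - q^(n+1))`. The `q`-Pascal rule gives `c(n+1,k) = c(n,k) - q^(-n) c(n,k-1)`,
so by induction on `n` it suffices to show `∑_k c(n,k-1) S_k({1}^r) / (1 - q^k) = A^(r+1) / q`.
For `r = 0` this is a telescoping sum: `c(n,k-1) / (1 - q^k) = A (c(n,k-1)/q^k - c(n,k)/q^(k+1))`,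
and more generally the tails `∑_{k ≥ j} c(n,k-1) / (1 - q^k)` equal `A c(n,j-1) / q^j`.
Unfolding `S_k({1}^(r+1))` and summing over `k` first, these tails multiply the sum by `A`.
-/

open Finset

theorem Nat.add_one_choose_two (k : ℕ) : (k + 1).choose 2 = k.choose 2 + k := by
  rw [Nat.choose_succ_succ, Nat.choose_one_right, add_comm]

section

variable {K : Type*} [Field K] {q : K}

theorem qbin_zero_right (n : ℕ) : qbin q n 0 = 1 := by simp [qbin]

theorem qbin_of_lt {n k : ℕ} (h : n < k) : qbin q n k = 0 := by simp [qbin, h.not_ge]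

theorem qbin_succ_right {n k : ℕ} (h : k ≤ n) :
    qbin q n (k + 1) = qbin q n k * (1 - q ^ (n - k)) / (1 - q ^ (k + 1)) := by
  rcases h.lt_or_eq with h | rfl
  · rw [qbin, if_pos (Nat.succ_le_of_lt h), qbin, if_pos h.le, prod_range_succ, prod_range_succ,
      mul_div_mul_comm, mul_div_assoc]
  · simp [qbin_of_lt]

theorem qbin_succ_succ {n k : ℕ} (h : k ≤ n) :
    qbin q (n + 1) (k + 1) = qbin q n k * (1 - q ^ (n + 1)) / (1 - q ^ (k + 1)) := by
  rw [qbin, if_pos (by omega), qbin, if_pos h, prod_range_succ' (fun i ↦ 1 - q ^ (n + 1 - i)),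
    prod_range_succ (fun i ↦ 1 - q ^ (i + 1))]
  simp only [Nat.add_sub_add_right, Nat.sub_zero]
  rw [mul_div_mul_comm, mul_div_assoc]

theorem qbin_succ_succ_eq_add {n k : ℕ} (h : k ≤ n) (hq : q ^ (k + 1) ≠ 1) :
    qbin q (n + 1) (k + 1) = qbin q n k + q ^ (k + 1) * qbin q n (k + 1) := by
  have hk : 1 - q ^ (k + 1) ≠ 0 := sub_ne_zero.mpr hq.symm
  have hpow : q ^ (k + 1) * q ^ (n - k) = q ^ (n + 1) := by rw [← pow_add]; congr 1; omega
  rw [qbin_succ_succ h, qbin_succ_right h, ← hpow]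
  field_simp
  ring

def altQbin (q : K) (n k : ℕ) : K :=
  (-1) ^ k * qbin q n k * q ^ (k + 1).choose 2 / q ^ (n * k)

theorem altQbin_eq_zpow (hq0 : q ≠ 0) (n k : ℕ) :
    altQbin q n k = (-1) ^ k * qbin q n k * q ^ ((k.choose 2 : ℤ) - (n - 1 : ℤ) * k) := by
  rw [altQbin, mul_div_assoc, show (k.choose 2 : ℤ) - (n - 1 : ℤ) * k =
    ((k + 1).choose 2 : ℕ) - ((n * k : ℕ) : ℤ) by push_cast [Nat.add_one_choose_two]; ring,
    zpow_sub₀ hq0, zpow_natCast, zpow_natCast]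

theorem altQbin_zero_right (n : ℕ) : altQbin q n 0 = 1 := by
  simp [altQbin, qbin_zero_right]

theorem altQbin_of_lt {n k : ℕ} (h : n < k) : altQbin q n k = 0 := by
  simp [altQbin, qbin_of_lt h]

theorem altQbin_succ_succ (hq0 : q ≠ 0) {n k : ℕ} (h : k ≤ n) (hq : q ^ (k + 1) ≠ 1) :
    altQbin q (n + 1) (k + 1) = altQbin q n (k + 1) - altQbin q n k / q ^ n := by
  simp only [altQbin, qbin_succ_succ_eq_add h hq, Nat.add_one_choose_two (k + 1), pow_succ,
    pow_add, add_mul, mul_add]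
  field_simp
  ring

theorem altQbin_div_one_sub_pow (hq0 : q ≠ 0) {n k : ℕ} (h : k ≤ n) (hk : q ^ (k + 1) ≠ 1)
    (hn : q ^ (n + 1) ≠ 1) :
    altQbin q n k / (1 - q ^ (k + 1)) =
      q ^ (n + 1) / (1 - q ^ (n + 1)) *
        (altQbin q n k / q ^ (k + 1) - altQbin q n (k + 1) / q ^ (k + 2)) := by
  have hk' : 1 - q ^ (k + 1) ≠ 0 := sub_ne_zero.mpr hk.symm
  have hn' : 1 - q ^ (n + 1) ≠ 0 := sub_ne_zero.mpr hn.symm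
  obtain ⟨d, rfl⟩ := Nat.exists_eq_add_of_le h
  simp only [altQbin, qbin_succ_right h, Nat.add_one_choose_two (k + 1), Nat.add_sub_cancel_left]
  have hqn : q ^ (k + d + 1) = q ^ k * q * q ^ d := by ring
  simp only [hqn, pow_succ, pow_add, mul_add, add_mul] at hk' hn' ⊢
  field_simp
  ring

theorem sum_Icc_altQbin_pred_div (hq0 : q ≠ 0) {n j : ℕ}
    (hq : ∀ i, 1 ≤ i → i ≤ n + 1 → q ^ i ≠ 1) (hj : 1 ≤ j) (hjn : j ≤ n + 1) :
    ∑ k ∈ Icc j (n + 1), altQbin q n (k - 1) / (1 - q ^ k) =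
      q ^ (n + 1) / (1 - q ^ (n + 1)) * (altQbin q n (j - 1) / q ^ j) := by
  set T : ℕ → K := fun k ↦ altQbin q n (k - 1) / q ^ k
  have hstep : ∀ k ∈ Icc j (n + 1),
      altQbin q n (k - 1) / (1 - q ^ k) =
        -(q ^ (n + 1) / (1 - q ^ (n + 1))) * (T (k + 1) - T k) := by
    intro k hk
    obtain ⟨l, rfl⟩ : ∃ l, k = l + 1 := ⟨k - 1, by simp only [mem_Icc] at hk; omega⟩
    simp only [mem_Icc] at hk
    rw [Nat.add_sub_cancel, altQbin_div_one_sub_pow hq0 (by omega) (hq _ (by omega) (by omega))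
      (hq _ (by omega) le_rfl)]
    simp only [T, Nat.add_sub_cancel]
    ring
  rw [sum_congr rfl hstep, ← mul_sum, sum_Icc_sub hjn]
  simp only [T, Nat.add_sub_cancel, altQbin_of_lt (Nat.lt_succ_self n), zero_div]
  ring

theorem sum_Icc_altQbin_pred_mul_mhsq (hq0 : q ≠ 0) {n : ℕ}
    (hq : ∀ i, 1 ≤ i → i ≤ n + 1 → q ^ i ≠ 1) (r : ℕ) :
    ∑ k ∈ Icc 1 (n + 1), altQbin q n (k - 1) * (mhsq q 1 r k / (1 - q ^ k)) =
      (q ^ (n + 1) / (1 - q ^ (n + 1))) ^ (r + 1) / q := by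
  induction r with
  | zero =>
    simp only [mhsq, ← mul_div_assoc, mul_one]
    rw [sum_Icc_altQbin_pred_div hq0 hq le_rfl (by omega)]
    simp [altQbin_zero_right, div_eq_mul_inv]
  | succ r ih =>
    calc ∑ k ∈ Icc 1 (n + 1), altQbin q n (k - 1) * (mhsq q 1 (r + 1) k / (1 - q ^ k))
        = ∑ k ∈ Icc 1 (n + 1), ∑ j ∈ Icc 1 k,
            altQbin q n (k - 1) / (1 - q ^ k) * (q ^ j / (1 - q ^ j) * mhsq q 1 r j) := by
          refine sum_congr rfl fun k _ ↦ ?_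
          simp only [mhsq, pow_one, mul_sum, sum_div]
          exact sum_congr rfl fun j _ ↦ by ring
      _ = ∑ j ∈ Icc 1 (n + 1), (∑ k ∈ Icc j (n + 1), altQbin q n (k - 1) / (1 - q ^ k)) *
            (q ^ j / (1 - q ^ j) * mhsq q 1 r j) := by
          simp only [sum_mul]
          exact sum_comm' fun k j ↦ by simp only [mem_Icc]; omega
      _ = q ^ (n + 1) / (1 - q ^ (n + 1)) *
            ∑ j ∈ Icc 1 (n + 1), altQbin q n (j - 1) * (mhsq q 1 r j / (1 - q ^ j)) := by
          rw [mul_sum]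
          refine sum_congr rfl fun j hj ↦ ?_
          simp only [mem_Icc] at hj
          rw [sum_Icc_altQbin_pred_div hq0 hq hj.1 hj.2]
          field_simp
      _ = _ := by rw [ih, pow_succ' _ (r + 1), mul_div_assoc]

theorem sum_Icc_altQbin_mul_mhsq (hq0 : q ≠ 0) {n : ℕ}
    (hq : ∀ i, 1 ≤ i → i ≤ n → q ^ i ≠ 1) (r : ℕ) :
    ∑ k ∈ Icc 1 n, altQbin q n k * (mhsq q 1 r k / (1 - q ^ k)) =
      -∑ k ∈ Icc 1 n, q ^ (r * k) / (1 - q ^ k) ^ (r + 1) := by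
  induction n with
  | zero => simp
  | succ n ih =>
    have hpascal : ∀ k ∈ Icc 1 (n + 1),
        altQbin q (n + 1) k = altQbin q n k - altQbin q n (k - 1) / q ^ n := by
      intro k hk
      obtain ⟨l, rfl⟩ : ∃ l, k = l + 1 := ⟨k - 1, by simp only [mem_Icc] at hk; omega⟩
      simp only [mem_Icc] at hk
      exact altQbin_succ_succ hq0 (by omega) (hq _ hk.1 hk.2)
    have hG : (q ^ (n + 1) / (1 - q ^ (n + 1))) ^ (r + 1) / q / q ^ n =
        q ^ (r * (n + 1)) / (1 - q ^ (n + 1)) ^ (r + 1) := by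
      rw [div_pow, ← pow_mul, show (n + 1) * (r + 1) = r * (n + 1) + n + 1 by ring, pow_succ,
        pow_add]
      field_simp
    rw [sum_congr rfl fun k hk ↦ by rw [hpascal k hk, sub_mul, div_mul_eq_mul_div],
      sum_sub_distrib, ← sum_div, sum_Icc_altQbin_pred_mul_mhsq hq0 hq, hG,
      sum_Icc_succ_top (by omega), altQbin_of_lt (Nat.lt_succ_self n), zero_mul, add_zero,
      ih fun i h1 h2 ↦ hq i h1 (by omega), sum_Icc_succ_top (by omega)]
    ring

end

theorem stmt16_general {K : Type*} [Field K] (n : ℕ) (r : ℕ) (q : K) (hq0 : q ≠ 0)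
    (hq : ∀ j, 1 ≤ j → j ≤ n → q ^ j ≠ 1) :
    ∑ k ∈ Finset.Icc 1 n,
        (-1 : K) ^ k * qbin q n k * q ^ ((k.choose 2 : ℤ) - (n - 1 : ℤ) * k) *
          (mhsq q 1 r k / (1 - q ^ k))
      = -∑ k ∈ Finset.Icc 1 n, q ^ (r * k) / (1 - q ^ k) ^ (r + 1) := by
  simp only [← altQbin_eq_zpow hq0]
  exact sum_Icc_altQbin_mul_mhsq hq0 hq r

theorem stmt16 {K : Type*} [Field K] (n : ℕ) (hn : 1 ≤ n) (r : ℕ) (q : K) (hq0 : q ≠ 0)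
    (hq : ∀ j, 1 ≤ j → j ≤ n → q ^ j ≠ 1) :
    ∑ k ∈ Finset.Icc 1 n,
        (-1 : K) ^ k * qbin q n k * q ^ ((k.choose 2 : ℤ) - (n - 1 : ℤ) * k) *
          (mhsq q 1 r k / (1 - q ^ k))
      = -∑ k ∈ Finset.Icc 1 n, q ^ (r * k) / (1 - q ^ k) ^ (r + 1) :=
  stmt16_general n r q hq0 hq
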